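/- If S ∈ GL_m(F) and T ∈ GL_n(F) are Perron similarities, then S ⊗ T is a Perron similarity. Specifically, if Se_k ≥ 0 and e_k^T S^{-1} ≥ 0 (for some k), and Te_ℓ ≥ 0 and e_ℓ^T T^{-1} ≥ 0 (for some ℓ), then column (k-1)n+ℓ of S ⊗ T and row (k-1)n+ℓ of (S ⊗ T)^{-1} are both nonnegative. -/

import Mathlib

/-! `matKron` is Mathlib's Kronecker product reindexed along `finProdFinEquiv`, under which the
index `k * n + ℓ` is the pair `(k, ℓ)`. So column `k * n + ℓ` of `S ⊗ T` has entries
`S i k * T i' ℓ`, and since `(S ⊗ T)⁻¹ = S⁻¹ ⊗ T⁻¹`, row `k * n + ℓ` of the inverse has entries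
`S⁻¹ k j * T⁻¹ ℓ j'`; both are products of nonnegative reals. -/

/-- The Kronecker product of vectors. -/
def vecKron {F : Type*} [Mul F] {m n : ℕ} (x : Fin m → F) (y : Fin n → F) :
    Fin (m * n) → F :=
  fun i => x i.divNat * y i.modNat

/-- The Kronecker product of matrices. -/
def matKron {F : Type*} [Mul F] {m n p q : ℕ}
    (S : Matrix (Fin m) (Fin n) F) (T : Matrix (Fin p) (Fin q) F) :
    Matrix (Fin (m * p)) (Fin (n * q)) F :=
  fun i j => S i.divNat j.divNat * T i.modNat j.modNat

/-- An entry of a matrix over `F = ℝ` or `ℂ` is nonnegative: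
it is a nonnegative real number. -/
def entryNonneg {F : Type*} [RCLike F] (z : F) : Prop :=
  ∃ r : ℝ, 0 ≤ r ∧ z = (r : F)

/-- The Perron spectracone `𝒞(S) = {x : S D_x S⁻¹ ≥ 0 entrywise}`. -/
def spectracone {F : Type*} [RCLike F] {n : ℕ} (S : Matrix (Fin n) (Fin n) F) :
    Set (Fin n → F) :=
  {x | ∀ i j, entryNonneg ((S * Matrix.diagonal x * S⁻¹) i j)}

theorem entryNonneg.mul {F : Type*} [RCLike F] {z w : F} (hz : entryNonneg z)
    (hw : entryNonneg w) : entryNonneg (z * w) := by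
  obtain ⟨r, hr, rfl⟩ := hz
  obtain ⟨s, hs, rfl⟩ := hw
  exact ⟨r * s, mul_nonneg hr hs, by push_cast; rfl⟩

theorem Fin.divNat_mk_mul_add {m n : ℕ} (k : Fin m) (ℓ : Fin n)
    (h : k.val * n + ℓ.val < m * n) : (⟨k.val * n + ℓ.val, h⟩ : Fin (m * n)).divNat = k := by
  ext
  simp only [Fin.coe_divNat]
  rw [Nat.add_comm, Nat.add_mul_div_right _ _ (Fin.pos ℓ), Nat.div_eq_of_lt ℓ.isLt, Nat.zero_add]

theorem Fin.modNat_mk_mul_add {m n : ℕ} (k : Fin m) (ℓ : Fin n)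
    (h : k.val * n + ℓ.val < m * n) : (⟨k.val * n + ℓ.val, h⟩ : Fin (m * n)).modNat = ℓ := by
  ext
  simp only [Fin.coe_modNat]
  rw [Nat.add_comm, Nat.add_mul_mod_self_right, Nat.mod_eq_of_lt ℓ.isLt]

section matKron

variable {F : Type*} {m n p q : ℕ}

theorem matKron_eq_submatrix_kronecker [Mul F] (A : Matrix (Fin m) (Fin n) F)
    (B : Matrix (Fin p) (Fin q) F) :
    matKron A B = (Matrix.kroneckerMap (· * ·) A B).submatrix
      finProdFinEquiv.symm finProdFinEquiv.symm :=
  rfl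

theorem det_matKron [CommRing F] (A : Matrix (Fin m) (Fin m) F) (B : Matrix (Fin n) (Fin n) F) :
    (matKron A B).det = A.det ^ n * B.det ^ m := by
  rw [matKron_eq_submatrix_kronecker, Matrix.det_submatrix_equiv_self, Matrix.det_kronecker,
    Fintype.card_fin, Fintype.card_fin]

theorem inv_matKron [CommRing F] (A : Matrix (Fin m) (Fin m) F) (B : Matrix (Fin n) (Fin n) F) :
    (matKron A B)⁻¹ = matKron A⁻¹ B⁻¹ := by
  rw [matKron_eq_submatrix_kronecker, Matrix.inv_submatrix_equiv, Matrix.inv_kronecker]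
  rfl

theorem entryNonneg_matKron_col [RCLike F] {A : Matrix (Fin p) (Fin m) F}
    {B : Matrix (Fin q) (Fin n) F} {k : Fin m} {ℓ : Fin n}
    (hA : ∀ i, entryNonneg (A i k)) (hB : ∀ i, entryNonneg (B i ℓ))
    (h : k.val * n + ℓ.val < m * n) (i : Fin (p * q)) :
    entryNonneg (matKron A B i ⟨k.val * n + ℓ.val, h⟩) := by
  unfold matKron
  rw [Fin.divNat_mk_mul_add, Fin.modNat_mk_mul_add]
  exact (hA _).mul (hB _)

theorem entryNonneg_matKron_row [RCLike F] {A : Matrix (Fin m) (Fin p) F}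
    {B : Matrix (Fin n) (Fin q) F} {k : Fin m} {ℓ : Fin n}
    (hA : ∀ j, entryNonneg (A k j)) (hB : ∀ j, entryNonneg (B ℓ j))
    (h : k.val * n + ℓ.val < m * n) (j : Fin (p * q)) :
    entryNonneg (matKron A B ⟨k.val * n + ℓ.val, h⟩ j) := by
  unfold matKron
  rw [Fin.divNat_mk_mul_add, Fin.modNat_mk_mul_add]
  exact (hA _).mul (hB _)

end matKron

/-- If `S` and `T` are Perron similarities witnessed by nonnegative column `k` of `S`,
row `k` of `S⁻¹`, column `ℓ` of `T`, and row `ℓ` of `T⁻¹`, then column `(k-1)n+ℓ` of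
`S ⊗ T` and row `(k-1)n+ℓ` of `(S ⊗ T)⁻¹` are both nonnegative; in particular
`S ⊗ T` is a Perron similarity. -/
theorem matKron_isPerronSimilarity {F : Type*} [RCLike F] {m n : ℕ}
    (S : Matrix (Fin m) (Fin m) F) (T : Matrix (Fin n) (Fin n) F)
    (hS : IsUnit S.det) (hT : IsUnit T.det)
    (k : Fin m) (ℓ : Fin n)
    (hScol : ∀ i, entryNonneg (S i k)) (hSrow : ∀ j, entryNonneg (S⁻¹ k j))
    (hTcol : ∀ i, entryNonneg (T i ℓ)) (hTrow : ∀ j, entryNonneg (T⁻¹ ℓ j)) :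
    IsUnit (matKron S T).det ∧
      (∀ i, entryNonneg (matKron S T i
        (⟨k.val * n + ℓ.val, by
          calc k.val * n + ℓ.val < k.val * n + n := by omega
          _ = (k.val + 1) * n := by ring
          _ ≤ m * n := Nat.mul_le_mul_right n k.isLt⟩ : Fin (m * n)))) ∧
      (∀ j, entryNonneg ((matKron S T)⁻¹
        (⟨k.val * n + ℓ.val, by
          calc k.val * n + ℓ.val < k.val * n + n := by omega
          _ = (k.val + 1) * n := by ring
          _ ≤ m * n := Nat.mul_le_mul_right n k.isLt⟩ : Fin (m * n)) j)) := by
  refine ⟨?_, fun i => entryNonneg_matKron_col hScol hTcol _ i, fun j => ?_⟩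
  · rw [det_matKron]
    exact (hS.pow n).mul (hT.pow m)
  · rw [inv_matKron]
    exact entryNonneg_matKron_row hSrow hTrow _ j
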